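/- arXiv:1202.5049 — 6 statements merged into one kernel-verified Lean document; each statement's English description precedes it below -/
import Mathlib

section
/- If y ∈ ℝ_{≥0}^𝒦 is feasible for (DCR), then Φ(y) is feasible for (BCR). Moreover Φ preserves cost: Σ_{a∈A} c_a Φ(y)_a = Σ_{K∈𝒦} c_K y_K. -/
open Classical

noncomputable section

variable {V : Type*} [Fintype V] [DecidableEq V]

/-- A directed full component of a Steiner tree instance `(G, R)`: a subtree `H` of `G`
whose leaves are exactly the terminals it contains (internal vertices are Steiner
vertices), together with an orientation of all its edges towards a chosen terminal,
the sink.  The orientation is recorded by the arc set `arcs`, oriented towards the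
sink, i.e. every non-sink vertex has exactly one outgoing arc and the sink has none. -/
structure DirFullComp (G : SimpleGraph V) (R : Set V) where
  H : G.Subgraph
  nonempty : H.verts.Nonempty
  isTree : H.coe.IsTree
  leaf_iff : ∀ v ∈ H.verts, (v ∈ R ↔ (H.neighborSet v).ncard = 1)
  sink : V
  sink_mem : sink ∈ H.verts
  sink_terminal : sink ∈ R
  arcs : Finset (V × V)
  arcs_adj : ∀ a ∈ arcs, H.Adj a.1 a.2
  arcs_total : ∀ u v : V, H.Adj u v → (u, v) ∈ arcs ∨ (v, u) ∈ arcs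
  arcs_antisymm : ∀ u v : V, (u, v) ∈ arcs → (v, u) ∉ arcs
  toward_sink : ∀ v ∈ H.verts, v ≠ sink → ∃! w : V, (v, w) ∈ arcs
  sink_no_out : ∀ w : V, (sink, w) ∉ arcs

namespace DirFullComp

variable {G : SimpleGraph V} {R : Set V}

/-- The sources of a directed full component: its terminals other than the sink. -/
def sources (K : DirFullComp G R) : Set V := (K.H.verts ∩ R) \ {K.sink}

/-- `K` crosses `U` iff its sink lies outside `U` and some source lies in `U`. -/
def crosses (K : DirFullComp G R) (U : Set V) : Prop :=
  K.sink ∉ U ∧ (K.sources ∩ U).Nonempty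

/-- `Δ_K⁺(U) ∈ {0,1}`. -/
def cross01 (K : DirFullComp G R) (U : Set V) : ℝ := if K.crosses U then 1 else 0

/-- Characteristic vector `χ_K ∈ ℝ^A` of the arc set of `K`. -/
def chi (K : DirFullComp G R) : V × V → ℝ := fun a => if a ∈ K.arcs then 1 else 0

/-- Cost `c_K` of the component w.r.t. arc costs `c`. -/
def cost (K : DirFullComp G R) (c : V → V → ℝ) : ℝ := ∑ a ∈ K.arcs, c a.1 a.2

/-- In a quasi-bipartite instance without terminal-terminal edges, every full
component has a unique Steiner vertex, its centre. -/
def IsCentre (K : DirFullComp G R) (v : V) : Prop := K.H.verts \ R = {v}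

end DirFullComp

instance (G : SimpleGraph V) : Finite G.Subgraph := by
  apply Finite.of_injective (fun H => (H.verts, H.Adj))
  intro H₁ H₂ h
  cases H₁; cases H₂
  simp only [Prod.mk.injEq] at h
  obtain ⟨h1, h2⟩ := h
  subst h1; subst h2; rfl

instance (G : SimpleGraph V) (R : Set V) : Finite (DirFullComp G R) := by
  apply Finite.of_injective (fun K : DirFullComp G R => (K.H, K.sink, K.arcs))
  intro K₁ K₂ h
  cases K₁; cases K₂
  simp only [Prod.mk.injEq] at h
  obtain ⟨h1, h2, h3⟩ := h
  subst h1; subst h2; subst h3; rfl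
/-- The arc set `A` of the bidirected digraph `D` obtained from `G`. -/
def arcSet (G : SimpleGraph V) : Set (V × V) := {a | G.Adj a.1 a.2}

/-- `δ⁺(U)`: arcs of `D` with tail in `U` and head outside `U`. -/
def outArcs (G : SimpleGraph V) (U : Set V) : Set (V × V) :=
  {a | G.Adj a.1 a.2 ∧ a.1 ∈ U ∧ a.2 ∉ U}

/-- `x(δ⁺(U))`. -/
def cutx (G : SimpleGraph V) (x : V × V → ℝ) (U : Set V) : ℝ :=
  ∑ᶠ a ∈ outArcs G U, x a

/-- `y(Δ⁺(U))`: total `y`-weight of directed full components crossing `U`. -/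
def cuty (G : SimpleGraph V) (R : Set V) (y : DirFullComp G R → ℝ) (U : Set V) : ℝ :=
  ∑ᶠ K ∈ {K : DirFullComp G R | K.crosses U}, y K

/-- A set is valid if it contains a terminal but not the root. -/
def Valid (R : Set V) (r : V) (U : Set V) : Prop := (U ∩ R).Nonempty ∧ r ∉ U

/-- Quasi-bipartite: no edge joins two Steiner vertices. -/
def QuasiBipartite (G : SimpleGraph V) (R : Set V) : Prop :=
  ∀ u v : V, G.Adj u v → u ∈ R ∨ v ∈ R

/-- No edge joins two terminals. -/
def NoTerminalEdges (G : SimpleGraph V) (R : Set V) : Prop :=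
  ∀ u v : V, G.Adj u v → u ∉ R ∨ v ∉ R

/-- Intersecting supermodular function on subsets of `R`. -/
def IntersectingSupermodular (R : Set V) (f : Set V → ℝ) : Prop :=
  ∀ A B : Set V, A ⊆ R → B ⊆ R → (A ∩ B).Nonempty →
    f A + f B ≤ f (A ∩ B) + f (A ∪ B)

/-- Feasibility for (BCR_f). -/
def BCRfFeasible (G : SimpleGraph V) (R : Set V) (r : V) (f : Set V → ℝ)
    (x : V × V → ℝ) : Prop :=
  (∀ a, 0 ≤ x a) ∧ ∀ U : Set V, Valid R r U → f (U ∩ R) ≤ cutx G x U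

/-- Feasibility for (DCR_f). -/
def DCRfFeasible (G : SimpleGraph V) (R : Set V) (r : V) (f : Set V → ℝ)
    (y : DirFullComp G R → ℝ) : Prop :=
  (∀ K, 0 ≤ y K) ∧ ∀ U : Set V, U.Nonempty → U ⊆ R \ {r} → f U ≤ cuty G R y U

/-- Feasibility for (BCR). -/
def BCRFeasible (G : SimpleGraph V) (R : Set V) (r : V) (x : V × V → ℝ) : Prop :=
  BCRfFeasible G R r (fun _ => 1) x

/-- Feasibility for (DCR). -/
def DCRFeasible (G : SimpleGraph V) (R : Set V) (r : V) (y : DirFullComp G R → ℝ) : Prop :=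
  DCRfFeasible G R r (fun _ => 1) y

/-- The (BCR) objective `∑_{a ∈ A} c_a x_a`. -/
def BCRCost (G : SimpleGraph V) (c : V → V → ℝ) (x : V × V → ℝ) : ℝ :=
  ∑ᶠ a ∈ arcSet G, c a.1 a.2 * x a

/-- The (DCR) objective `∑_{K ∈ 𝒦} c_K y_K`. -/
def DCRCost (G : SimpleGraph V) (R : Set V) (c : V → V → ℝ)
    (y : DirFullComp G R → ℝ) : ℝ :=
  ∑ᶠ K : DirFullComp G R, K.cost c * y K

/-- The linear map `Φ(y) = ∑_K y_K · χ_K`. -/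
def Phi (G : SimpleGraph V) (R : Set V) (y : DirFullComp G R → ℝ) : V × V → ℝ :=
  fun a => ∑ᶠ K : DirFullComp G R, y K * K.chi a

/-- A minimal feasible solution of (BCR_f): feasible, and decreasing any single
coordinate by any positive amount destroys feasibility. -/
def BCRfMinimal (G : SimpleGraph V) (R : Set V) (r : V) (f : Set V → ℝ)
    (x : V × V → ℝ) : Prop :=
  BCRfFeasible G R r f x ∧
    ∀ a : V × V, ∀ ε : ℝ, 0 < ε →
      ¬ BCRfFeasible G R r f (Function.update x a (x a - ε))

/-- A minimal feasible solution of (BCR). -/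
def BCRMinimal (G : SimpleGraph V) (R : Set V) (r : V) (x : V × V → ℝ) : Prop :=
  BCRfMinimal G R r (fun _ => 1) x

/-- Membership in the polyhedron `𝓘`. -/
def memI (G : SimpleGraph V) (R : Set V) (r : V) (x : V × V → ℝ)
    (y : DirFullComp G R → ℝ) : Prop :=
  (∀ a, 0 ≤ x a) ∧ (∀ K, 0 ≤ y K) ∧
    ∀ U : Set V, Valid R r U → 1 ≤ cutx G x U + cuty G R y U

/-- A valid set that is tight for `(x, y) ∈ 𝓘`. -/
def TightFor (G : SimpleGraph V) (R : Set V) (r : V) (x : V × V → ℝ)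
    (y : DirFullComp G R → ℝ) (U : Set V) : Prop :=
  Valid R r U ∧ cutx G x U + cuty G R y U = 1

/-- A directed full component `K` is feasible w.r.t. `(x, y) ∈ 𝓘` if some positive
weight can be shifted from the arcs of `K` onto `K` while staying in `𝓘`. -/
def FeasibleComp (G : SimpleGraph V) (R : Set V) (r : V) (x : V × V → ℝ)
    (y : DirFullComp G R → ℝ) (K : DirFullComp G R) : Prop :=
  ∃ lam : ℝ, 0 < lam ∧
    memI G R r (x - lam • K.chi) (y + lam • (Pi.single K 1 : DirFullComp G R → ℝ))

/-- The set `𝒞` of eligible source nodes for centre `v` and sink `u`. -/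
def Cset (G : SimpleGraph V) (R : Set V) (r : V) (x : V × V → ℝ)
    (y : DirFullComp G R → ℝ) (v u : V) : Set V :=
  {w | G.Adj v w ∧ w ≠ u ∧
    ¬ ∃ U : Set V, TightFor G R r x y U ∧ u ∈ U ∧ w ∈ U ∧ v ∉ U}

/-- The family `𝒳`. -/
def Xfam (G : SimpleGraph V) (R : Set V) (r : V) (x : V × V → ℝ)
    (y : DirFullComp G R → ℝ) (v u : V) : Set (Set V) :=
  {S | ∃ X : Set V, TightFor G R r x y X ∧ u ∉ X ∧ v ∉ X ∧
    S = X ∩ Cset G R r x y v u}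

/-- The family `𝒴`. -/
def Yfam (G : SimpleGraph V) (R : Set V) (r : V) (x : V × V → ℝ)
    (y : DirFullComp G R → ℝ) (v u : V) : Set (Set V) :=
  {S | ∃ Y : Set V, TightFor G R r x y Y ∧ v ∈ Y ∧ u ∉ Y ∧
    S = Y ∩ Cset G R r x y v u}

/-- `𝒳*`: inclusion-wise maximal members of `𝒳`. -/
def XStar (G : SimpleGraph V) (R : Set V) (r : V) (x : V × V → ℝ)
    (y : DirFullComp G R → ℝ) (v u : V) : Set (Set V) :=
  {X ∈ Xfam G R r x y v u | ∀ X' ∈ Xfam G R r x y v u, X ⊆ X' → X' = X}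

/-- `𝒴*`: inclusion-wise minimal members of `𝒴`. -/
def YStar (G : SimpleGraph V) (R : Set V) (r : V) (x : V × V → ℝ)
    (y : DirFullComp G R → ℝ) (v u : V) : Set (Set V) :=
  {Y ∈ Yfam G R r x y v u | ∀ Y' ∈ Yfam G R r x y v u, Y' ⊆ Y → Y' = Y}

/-- The index set of the dual (DCR_f^D): nonempty subsets of `R ∖ {r}`. -/
def dualIndex (R : Set V) (r : V) : Set (Set V) :=
  {U : Set V | U.Nonempty ∧ U ⊆ R \ {r}}

/-- Feasibility for the dual (DCR_f^D). -/
def DualFeasible (G : SimpleGraph V) (R : Set V) (r : V) (c : V → V → ℝ)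
    (z : Set V → ℝ) : Prop :=
  (∀ U, 0 ≤ z U) ∧ (∀ U : Set V, U ∉ dualIndex R r → z U = 0) ∧
    ∀ K : DirFullComp G R,
      ∑ᶠ U ∈ dualIndex R r, K.cross01 U * z U ≤ K.cost c

/-- Objective `f^T z` of the dual (DCR_f^D). -/
def DualObj (R : Set V) (r : V) (f : Set V → ℝ) (z : Set V → ℝ) : ℝ :=
  ∑ᶠ U ∈ dualIndex R r, f U * z U

section AuxLemmas

variable {G : SimpleGraph V} {R : Set V}

/-- Every non-sink vertex's unique outgoing arc points strictly closer to the sink. -/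
lemma DirFullComp.arc_toward (K : DirFullComp G R) :
    ∀ k : ℕ, ∀ v : K.H.verts,
      K.H.coe.dist v ⟨K.sink, K.sink_mem⟩ = k → (v : V) ≠ K.sink →
      ∃ w : K.H.verts, ((v : V), (w : V)) ∈ K.arcs ∧
        K.H.coe.dist w ⟨K.sink, K.sink_mem⟩ + 1 = k := by
  intro k
  induction k using Nat.strong_induction_on with
  | _ k ih =>
    intro v hdist hne
    have hconn : K.H.coe.Connected := K.isTree.isConnected
    rcases Nat.eq_zero_or_pos k with h0 | hk
    · exfalso
      apply hne
      have hvs : v = (⟨K.sink, K.sink_mem⟩ : K.H.verts) :=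
        (hconn.dist_eq_zero_iff).mp (by rw [hdist, h0])
      exact congrArg Subtype.val hvs
    obtain ⟨p, hp⟩ := hconn.exists_walk_length_eq_dist v ⟨K.sink, K.sink_mem⟩
    rw [hdist] at hp
    cases p with
    | nil => simp at hp; omega
    | @cons _ u _ h q =>
      simp only [SimpleGraph.Walk.length_cons] at hp
      have hud1 : K.H.coe.dist u ⟨K.sink, K.sink_mem⟩ ≤ k - 1 := by
        have := SimpleGraph.dist_le q; omega
      have hud2 : k ≤ K.H.coe.dist u ⟨K.sink, K.sink_mem⟩ + 1 := by
        obtain ⟨q', hq'⟩ := hconn.exists_walk_length_eq_dist u ⟨K.sink, K.sink_mem⟩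
        have := SimpleGraph.dist_le (SimpleGraph.Walk.cons h q')
        simp only [SimpleGraph.Walk.length_cons] at this
        omega
      have hadj : K.H.Adj (v : V) (u : V) := h
      rcases K.arcs_total _ _ hadj with hvu | huv
      · exact ⟨u, hvu, by omega⟩
      · exfalso
        have hune : (u : V) ≠ K.sink := by
          intro he
          exact K.sink_no_out (v : V) (by rw [← he]; exact huv)
        obtain ⟨w, hw, hwd⟩ := ih (k - 1) (by omega) u (by omega) hune
        obtain ⟨z, _, hzu⟩ := K.toward_sink (u : V) u.2 hune
        have h1 : (v : V) = z := hzu _ huv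
        have h2 : (w : V) = z := hzu _ hw
        have hvw : v = w := Subtype.ext (h1.trans h2.symm)
        rw [hvw] at hdist
        omega

/-- If the sink lies outside `U` and some vertex of `K` lies in `U`, some arc of `K`
leaves `U`. -/
lemma DirFullComp.exists_escape (K : DirFullComp G R) (U : Set V) (hsink : K.sink ∉ U) :
    ∀ k : ℕ, ∀ v : K.H.verts, K.H.coe.dist v ⟨K.sink, K.sink_mem⟩ = k → (v : V) ∈ U →
      ∃ a ∈ K.arcs, a.1 ∈ U ∧ a.2 ∉ U := by
  intro k
  induction k using Nat.strong_induction_on with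
  | _ k ih =>
    intro v hdist hvU
    have hne : (v : V) ≠ K.sink := fun he => hsink (he ▸ hvU)
    obtain ⟨w, hw, hwd⟩ := K.arc_toward k v hdist hne
    by_cases hwU : (w : V) ∈ U
    · exact ih (k - 1) (by omega) w (by omega) hwU
    · exact ⟨((v : V), (w : V)), hw, hvU, hwU⟩

/-- If `K` crosses `U ∩ R` then some arc of `K` leaves `U`. -/
lemma DirFullComp.crosses_escape (K : DirFullComp G R) {U : Set V}
    (hc : K.crosses (U ∩ R)) : ∃ a ∈ K.arcs, a.1 ∈ U ∧ a.2 ∉ U := by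
  obtain ⟨hsink, w, hwsrc, hwU, _⟩ := hc
  have hsinkU : K.sink ∉ U := fun h => hsink ⟨h, K.sink_terminal⟩
  have hwv : w ∈ K.H.verts := hwsrc.1.1
  exact K.exists_escape U hsinkU _ ⟨w, hwv⟩ rfl hwU

end AuxLemmas

theorem stmt0
    (G : SimpleGraph V) (R : Set V) (r : V) (hr : r ∈ R)
    (c : V → V → ℝ) (hc : ∀ u v, 0 ≤ c u v) (hcs : ∀ u v, c u v = c v u)
    (y : DirFullComp G R → ℝ) (hy : DCRFeasible G R r y) :
    BCRFeasible G R r (Phi G R y) ∧ BCRCost G c (Phi G R y) = DCRCost G R c y := by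
  classical
  haveI : Fintype (DirFullComp G R) := Fintype.ofFinite _
  obtain ⟨hy0, hycut⟩ := hy
  have hchi0 : ∀ (K : DirFullComp G R) (a : V × V), 0 ≤ K.chi a := by
    intro K a; unfold DirFullComp.chi; split <;> norm_num
  have hPhi : ∀ a, Phi G R y a = ∑ K : DirFullComp G R, y K * K.chi a := by
    intro a; exact finsum_eq_sum_of_fintype _
  have hPhi0 : ∀ a, 0 ≤ Phi G R y a := by
    intro a; rw [hPhi]
    exact Finset.sum_nonneg fun K _ => mul_nonneg (hy0 K) (hchi0 K a)
  -- arcs of K lie in the arc set of G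
  have harcs : ∀ (K : DirFullComp G R), ∀ a ∈ K.arcs, G.Adj a.1 a.2 := by
    intro K a ha; exact (K.arcs_adj a ha).adj_sub
  constructor
  · refine ⟨hPhi0, ?_⟩
    intro U hU
    obtain ⟨hUR, hrU⟩ := hU
    have hsub : U ∩ R ⊆ R \ {r} := by
      rintro x ⟨hxU, hxR⟩
      refine ⟨hxR, fun he => ?_⟩
      rw [Set.mem_singleton_iff] at he
      exact hrU (he ▸ hxU)
    have h1 : (1 : ℝ) ≤ cuty G R y (U ∩ R) := hycut (U ∩ R) hUR hsub
    set s := (Set.toFinite (outArcs G U)).toFinset with hsdef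
    have hcutx : cutx G (Phi G R y) U
        = ∑ K : DirFullComp G R, y K * ∑ a ∈ s, K.chi a := by
      rw [cutx, finsum_mem_eq_finite_toFinset_sum _ (Set.toFinite _)]
      rw [Finset.sum_congr rfl (fun a _ => hPhi a), Finset.sum_comm]
      exact Finset.sum_congr rfl fun K _ => (Finset.mul_sum _ _ _).symm
    have hcuty : cuty G R y (U ∩ R)
        = ∑ K ∈ Finset.univ.filter
            (fun K : DirFullComp G R => K.crosses (U ∩ R)), y K := by
      rw [cuty, finsum_mem_eq_finite_toFinset_sum _ (Set.toFinite _)]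
      apply Finset.sum_congr _ (fun _ _ => rfl)
      ext K
      simp [Set.Finite.mem_toFinset]
    have hcnt : ∀ K : DirFullComp G R, K.crosses (U ∩ R) →
        (1 : ℝ) ≤ ∑ a ∈ s, K.chi a := by
      intro K hK
      obtain ⟨a, ha, haU, haU'⟩ := K.crosses_escape hK
      have has : a ∈ s := by
        rw [hsdef, Set.Finite.mem_toFinset]
        exact ⟨harcs K a ha, haU, haU'⟩
      have h1a : (1 : ℝ) = K.chi a := by simp [DirFullComp.chi, ha]
      rw [h1a]
      exact Finset.single_le_sum (fun b _ => hchi0 K b) has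
    have hle : cuty G R y (U ∩ R) ≤ cutx G (Phi G R y) U := by
      rw [hcuty, hcutx, Finset.sum_filter]
      apply Finset.sum_le_sum
      intro K _
      by_cases hK : K.crosses (U ∩ R)
      · rw [if_pos hK]
        exact le_mul_of_one_le_right (hy0 K) (hcnt K hK)
      · rw [if_neg hK]
        exact mul_nonneg (hy0 K) (Finset.sum_nonneg fun a _ => hchi0 K a)
    exact le_trans h1 hle
  · set tA := (Set.toFinite (arcSet G)).toFinset with htA
    have hmemA : ∀ (K : DirFullComp G R), ∀ a ∈ K.arcs, a ∈ tA := by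
      intro K a ha
      rw [htA, Set.Finite.mem_toFinset]
      exact harcs K a ha
    have hinner : ∀ K : DirFullComp G R,
        ∑ a ∈ tA, c a.1 a.2 * K.chi a = K.cost c := by
      intro K
      have hfilter : tA.filter (fun a => a ∈ K.arcs) = K.arcs := by
        ext a
        simp only [Finset.mem_filter]
        exact ⟨fun h => h.2, fun h => ⟨hmemA K a h, h⟩⟩
      calc ∑ a ∈ tA, c a.1 a.2 * K.chi a
          = ∑ a ∈ tA, if a ∈ K.arcs then c a.1 a.2 else 0 := by
            apply Finset.sum_congr rfl
            intro a _
            unfold DirFullComp.chi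
            split <;> simp
        _ = ∑ a ∈ tA.filter (fun a => a ∈ K.arcs), c a.1 a.2 :=
            (Finset.sum_filter _ _).symm
        _ = K.cost c := by rw [hfilter]; rfl
    have hB : BCRCost G c (Phi G R y) = ∑ a ∈ tA, c a.1 a.2 * Phi G R y a := by
      rw [BCRCost, finsum_mem_eq_finite_toFinset_sum _ (Set.toFinite _)]
    have hD : DCRCost G R c y = ∑ K : DirFullComp G R, K.cost c * y K := by
      rw [DCRCost]; exact finsum_eq_sum_of_fintype _
    rw [hB, hD]
    calc ∑ a ∈ tA, c a.1 a.2 * Phi G R y a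
        = ∑ a ∈ tA, ∑ K : DirFullComp G R, y K * (c a.1 a.2 * K.chi a) := by
          apply Finset.sum_congr rfl
          intro a _
          rw [hPhi a, Finset.mul_sum]
          apply Finset.sum_congr rfl
          intro K _
          ring
      _ = ∑ K : DirFullComp G R, ∑ a ∈ tA, y K * (c a.1 a.2 * K.chi a) :=
          Finset.sum_comm
      _ = ∑ K : DirFullComp G R, K.cost c * y K := by
          apply Finset.sum_congr rfl
          intro K _
          rw [← Finset.mul_sum, hinner K]
          ring
end
end

section
/- For every y ∈ ℝ_{≥0}^𝒦, the function g: 2^R → ℝ defined by g(U) = 1 − Σ_{K∈𝒦} Δ_K^+(U)·y_K is intersecting supermodular. -/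
open Classical

noncomputable section

variable {V : Type*} [Fintype V] [DecidableEq V]

theorem stmt6
    (G : SimpleGraph V) (R : Set V) (y : DirFullComp G R → ℝ) (hy : ∀ K, 0 ≤ y K) :
    IntersectingSupermodular R
      (fun U => 1 - ∑ᶠ K : DirFullComp G R, K.cross01 U * y K) := by
  intro A B hA hB hAB
  haveI : Fintype (DirFullComp G R) := Fintype.ofFinite _
  simp only [finsum_eq_sum_of_fintype]
  have key : ∀ K : DirFullComp G R,
      K.cross01 (A ∩ B) * y K + K.cross01 (A ∪ B) * y K
        ≤ K.cross01 A * y K + K.cross01 B * y K := by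
    intro K
    have hI : K.crosses (A ∩ B) → K.crosses A ∨ K.crosses B := by
      rintro ⟨hs, w, hw1, hw2⟩
      by_cases hsA : K.sink ∈ A
      · right
        exact ⟨fun hsB => hs ⟨hsA, hsB⟩, w, hw1, hw2.2⟩
      · left
        exact ⟨hsA, w, hw1, hw2.1⟩
    have hU : K.crosses (A ∪ B) → K.crosses A ∨ K.crosses B := by
      rintro ⟨hs, w, hw1, hw2⟩
      rcases hw2 with hwA | hwB
      · exact Or.inl ⟨fun h => hs (Or.inl h), w, hw1, hwA⟩
      · exact Or.inr ⟨fun h => hs (Or.inr h), w, hw1, hwB⟩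
    have hIU : K.crosses (A ∩ B) → K.crosses (A ∪ B) → K.crosses A ∧ K.crosses B := by
      rintro ⟨_, w, hw1, hw2⟩ ⟨hs, _⟩
      exact ⟨⟨fun h => hs (Or.inl h), w, hw1, hw2.1⟩,
             ⟨fun h => hs (Or.inr h), w, hw1, hw2.2⟩⟩
    have hc : K.cross01 (A ∩ B) + K.cross01 (A ∪ B) ≤ K.cross01 A + K.cross01 B := by
      by_cases h1 : K.crosses (A ∩ B) <;> by_cases h2 : K.crosses (A ∪ B) <;>
        by_cases h3 : K.crosses A <;> by_cases h4 : K.crosses B <;>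
        simp [DirFullComp.cross01, h1, h2, h3, h4] <;> norm_num <;> tauto
    have hyK := hy K
    calc K.cross01 (A ∩ B) * y K + K.cross01 (A ∪ B) * y K
        = (K.cross01 (A ∩ B) + K.cross01 (A ∪ B)) * y K := by ring
      _ ≤ (K.cross01 A + K.cross01 B) * y K := by
          exact mul_le_mul_of_nonneg_right hc hyK
      _ = K.cross01 A * y K + K.cross01 B * y K := by ring
  have hsum : ∑ K : DirFullComp G R, K.cross01 (A ∩ B) * y K
      + ∑ K : DirFullComp G R, K.cross01 (A ∪ B) * y K
      ≤ ∑ K : DirFullComp G R, K.cross01 A * y K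
      + ∑ K : DirFullComp G R, K.cross01 B * y K := by
    rw [← Finset.sum_add_distrib, ← Finset.sum_add_distrib]
    exact Finset.sum_le_sum fun K _ => key K
  linarith
end
end

section
/- Let (x,y) ∈ 𝓘 and K ∈ 𝒦. Then K is feasible with respect to (x,y) if and only if x_a > 0 for every arc a of K and, for every valid set U ⊆ V that is tight for (x,y), Δ_K^+(U) ≥ |{a ∈ K : a ∈ δ^+(U)}|; that is, at most one arc of K crosses any tight valid set, and only when K itself crosses that set. -/
open Classical

noncomputable section

variable {V : Type*} [Fintype V] [DecidableEq V]

section stmt8helpers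

variable {G : SimpleGraph V} {R : Set V}

lemma cutx_sub (x : V × V → ℝ) (K : DirFullComp G R) (lam : ℝ) (U : Set V) :
    cutx G (x - lam • K.chi) U = cutx G x U
      - lam * (({a : V × V | a ∈ K.arcs ∧ a.1 ∈ U ∧ a.2 ∉ U}.ncard : ℝ)) := by
  classical
  have hfin : (outArcs G U).Finite := Set.toFinite _
  unfold cutx
  rw [finsum_mem_eq_finite_toFinset_sum _ hfin, finsum_mem_eq_finite_toFinset_sum _ hfin]
  have hset : {a : V × V | a ∈ K.arcs ∧ a.1 ∈ U ∧ a.2 ∉ U}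
      = ↑(hfin.toFinset.filter (· ∈ K.arcs)) := by
    ext a
    simp only [Set.mem_setOf_eq, Finset.coe_filter, Set.Finite.mem_toFinset, outArcs,
      Set.mem_setOf_eq]
    constructor
    · rintro ⟨h1, h2, h3⟩
      exact ⟨⟨(K.arcs_adj a h1).adj_sub, h2, h3⟩, h1⟩
    · rintro ⟨⟨_, h2, h3⟩, h1⟩
      exact ⟨h1, h2, h3⟩
  rw [hset, Set.ncard_coe_finset]
  simp only [Pi.sub_apply, Pi.smul_apply, smul_eq_mul, DirFullComp.chi]
  rw [Finset.sum_sub_distrib]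
  congr 1
  rw [← Finset.sum_boole, Finset.mul_sum]

lemma cuty_add (y : DirFullComp G R → ℝ) (K : DirFullComp G R) (lam : ℝ) (U : Set V) :
    cuty G R (y + lam • (Pi.single K 1 : DirFullComp G R → ℝ)) U
      = cuty G R y U + lam * K.cross01 U := by
  classical
  have hfin : {K' : DirFullComp G R | K'.crosses U}.Finite := Set.toFinite _
  unfold cuty
  rw [finsum_mem_eq_finite_toFinset_sum _ hfin, finsum_mem_eq_finite_toFinset_sum _ hfin]
  simp only [Pi.add_apply, Pi.smul_apply, smul_eq_mul, Pi.single_apply]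
  rw [Finset.sum_add_distrib]
  congr 1
  have : ∀ K' ∈ hfin.toFinset, lam * (if K' = K then (1:ℝ) else 0)
      = if K' = K then lam else 0 := by
    intro K' _; split <;> simp
  rw [Finset.sum_congr rfl this, Finset.sum_ite_eq' hfin.toFinset K (fun _ => lam)]
  simp only [Set.Finite.mem_toFinset, Set.mem_setOf_eq, DirFullComp.cross01]
  by_cases h : K.crosses U <;> simp [h]

end stmt8helpers

theorem stmt8
    (G : SimpleGraph V) (R : Set V) (r : V) (hr : r ∈ R) (hqb : QuasiBipartite G R)
    (x : V × V → ℝ) (y : DirFullComp G R → ℝ) (hxy : memI G R r x y)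
    (K : DirFullComp G R) :
    FeasibleComp G R r x y K ↔
      ((∀ a ∈ K.arcs, 0 < x a) ∧
        ∀ U : Set V, TightFor G R r x y U →
          (({a : V × V | a ∈ K.arcs ∧ a.1 ∈ U ∧ a.2 ∉ U}.ncard : ℝ)) ≤ K.cross01 U) := by
  classical
  set n : Set V → ℝ :=
    fun U => (({a : V × V | a ∈ K.arcs ∧ a.1 ∈ U ∧ a.2 ∉ U}.ncard : ℝ)) with hn
  constructor
  · rintro ⟨lam, hlam, hx', hy', hcut'⟩
    constructor
    · intro a ha
      have := hx' a
      simp only [Pi.sub_apply, Pi.smul_apply, smul_eq_mul, DirFullComp.chi, ha,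
        if_pos] at this
      nlinarith
    · rintro U ⟨hUv, hUt⟩
      have h1 := hcut' U hUv
      rw [cutx_sub, cuty_add] at h1
      have h2 : 0 ≤ lam * (K.cross01 U
          - (({a : V × V | a ∈ K.arcs ∧ a.1 ∈ U ∧ a.2 ∉ U}.ncard : ℝ))) := by nlinarith
      nlinarith
  · rintro ⟨hpos, htight⟩
    -- bad sets: valid sets where the number of crossing arcs exceeds cross01
    set Bad : Set (Set V) := {U : Set V | Valid R r U ∧ K.cross01 U < n U} with hBad
    have hBadFin : Bad.Finite := Set.toFinite _
    have hslack : ∀ U ∈ Bad, 0 < cutx G x U + cuty G R y U - 1 := by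
      rintro U ⟨hUv, hUlt⟩
      have h1 := hxy.2.2 U hUv
      rcases lt_or_eq_of_le h1 with h | h
      · linarith
      · exact absurd (htight U ⟨hUv, h.symm⟩) (not_le.mpr hUlt)
    set g : Set V → ℝ :=
      fun U => (cutx G x U + cuty G R y U - 1) / (n U - K.cross01 U) with hg
    set T : Finset ℝ :=
      insert 1 ((hBadFin.toFinset.image g) ∪ (K.arcs.image x)) with hT
    have hTne : T.Nonempty := ⟨1, Finset.mem_insert_self _ _⟩
    set lam : ℝ := T.min' hTne with hlam
    have hmempos : ∀ b ∈ T, 0 < b := by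
      intro b hb
      rw [hT] at hb
      rcases Finset.mem_insert.mp hb with h | h
      · simp [h]
      rcases Finset.mem_union.mp h with h | h
      · obtain ⟨U, hU, rfl⟩ := Finset.mem_image.mp h
        rw [Set.Finite.mem_toFinset] at hU
        exact div_pos (hslack U hU) (by linarith [hU.2])
      · obtain ⟨a, ha, rfl⟩ := Finset.mem_image.mp h
        exact hpos a ha
    have hlampos : 0 < lam := hmempos _ (T.min'_mem hTne)
    refine ⟨lam, hlampos, ?_, ?_, ?_⟩
    · intro a
      simp only [Pi.sub_apply, Pi.smul_apply, smul_eq_mul, DirFullComp.chi]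
      by_cases ha : a ∈ K.arcs
      · have hle : lam ≤ x a := T.min'_le _ (by
          rw [hT]
          exact Finset.mem_insert_of_mem (Finset.mem_union_right _
            (Finset.mem_image_of_mem x ha)))
        simp [ha]; linarith
      · simp [ha, hxy.1 a]
    · intro K'
      have h1 := hxy.2.1 K'
      have h2 : (0:ℝ) ≤ (Pi.single K 1 : DirFullComp G R → ℝ) K' := by
        rw [Pi.single_apply]; split <;> norm_num
      have : (0:ℝ) ≤ lam * (Pi.single K 1 : DirFullComp G R → ℝ) K' :=
        mul_nonneg hlampos.le h2
      simp only [Pi.add_apply, Pi.smul_apply, smul_eq_mul]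
      linarith
    · intro U hUv
      rw [cutx_sub, cuty_add]
      have hnU : (({a : V × V | a ∈ K.arcs ∧ a.1 ∈ U ∧ a.2 ∉ U}.ncard : ℝ)) = n U := rfl
      rw [hnU]
      have hbase := hxy.2.2 U hUv
      rcases le_or_gt (n U) (K.cross01 U) with hcase | hcase
      · have : lam * n U ≤ lam * K.cross01 U :=
          mul_le_mul_of_nonneg_left hcase hlampos.le
        linarith
      · have hUb : U ∈ Bad := ⟨hUv, hcase⟩
        have hle : lam ≤ g U := T.min'_le _ (by
          rw [hT]
          exact Finset.mem_insert_of_mem (Finset.mem_union_left _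
            (Finset.mem_image_of_mem g (hBadFin.mem_toFinset.mpr hUb))))
        have hd : 0 < n U - K.cross01 U := by linarith
        have : lam * (n U - K.cross01 U) ≤ cutx G x U + cuty G R y U - 1 := by
          rw [hg] at hle
          calc lam * (n U - K.cross01 U)
              ≤ ((cutx G x U + cuty G R y U - 1) / (n U - K.cross01 U))
                * (n U - K.cross01 U) := mul_le_mul_of_nonneg_right hle hd.le
            _ = cutx G x U + cuty G R y U - 1 := div_mul_cancel₀ _ hd.ne'
        linarith
end
end

section
/- Let (x,y) ∈ 𝓘 and let S, T ⊆ V be tight valid sets with S ∩ T ∩ R ≠ ∅. Then S∩T and S∪T are also valid sets that are tight for (x,y). -/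
open Classical

noncomputable section

variable {V : Type*} [Fintype V] [DecidableEq V]

private lemma arc_ineq (G : SimpleGraph V) (S T : Set V) (a : V × V) (c : ℝ) (hc : 0 ≤ c) :
    (if a ∈ outArcs G (S ∩ T) then c else 0) + (if a ∈ outArcs G (S ∪ T) then c else 0) ≤
    (if a ∈ outArcs G S then c else 0) + (if a ∈ outArcs G T then c else 0) := by
  simp only [outArcs, Set.mem_setOf_eq, Set.mem_inter_iff, Set.mem_union]
  by_cases hAdj : G.Adj a.1 a.2 <;> by_cases h1 : a.1 ∈ S <;> by_cases h2 : a.1 ∈ T <;>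
    by_cases h3 : a.2 ∈ S <;> by_cases h4 : a.2 ∈ T <;>
    simp [hAdj, h1, h2, h3, h4] <;> linarith

private lemma comp_ineq {G : SimpleGraph V} {R : Set V} (K : DirFullComp G R)
    (S T : Set V) (c : ℝ) (hc : 0 ≤ c) :
    (if K.crosses (S ∩ T) then c else 0) + (if K.crosses (S ∪ T) then c else 0) ≤
    (if K.crosses S then c else 0) + (if K.crosses T then c else 0) := by
  have h1 : K.crosses (S ∩ T) → K.crosses S ∨ K.crosses T := by
    rintro ⟨hs, w, ⟨hw, hwS, hwT⟩⟩
    rw [Set.mem_inter_iff] at hs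
    rcases not_and_or.mp hs with h | h
    · exact Or.inl ⟨h, w, hw, hwS⟩
    · exact Or.inr ⟨h, w, hw, hwT⟩
  have h2 : K.crosses (S ∪ T) → K.crosses S ∨ K.crosses T := by
    rintro ⟨hs, w, ⟨hw, hwST⟩⟩
    rw [Set.mem_union] at hs; push_neg at hs
    rcases hwST with h | h
    · exact Or.inl ⟨hs.1, w, hw, h⟩
    · exact Or.inr ⟨hs.2, w, hw, h⟩
  have h3 : K.crosses (S ∩ T) → K.crosses (S ∪ T) → K.crosses S ∧ K.crosses T := by
    rintro ⟨_, w, ⟨hw, hwS, hwT⟩⟩ ⟨hs, _⟩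
    rw [Set.mem_union] at hs; push_neg at hs
    exact ⟨⟨hs.1, w, hw, hwS⟩, ⟨hs.2, w, hw, hwT⟩⟩
  by_cases a : K.crosses (S ∩ T) <;> by_cases b : K.crosses (S ∪ T) <;>
    by_cases cs : K.crosses S <;> by_cases ct : K.crosses T <;>
    simp [a, b, cs, ct] <;> first | linarith | tauto

private lemma cutx_eq_sum (G : SimpleGraph V) (x : V × V → ℝ) (U : Set V) :
    cutx G x U = ∑ a : V × V, if a ∈ outArcs G U then x a else 0 := by
  rw [cutx, finsum_mem_def, finsum_eq_sum_of_fintype]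
  exact Finset.sum_congr rfl fun a _ => Set.indicator_apply _ _ _

noncomputable instance {G : SimpleGraph V} {R : Set V} : Fintype (DirFullComp G R) :=
  Fintype.ofFinite _

private lemma cuty_eq_sum (G : SimpleGraph V) (R : Set V) (y : DirFullComp G R → ℝ)
    (U : Set V) :
    cuty G R y U = ∑ K : DirFullComp G R, if K.crosses U then y K else 0 := by
  rw [cuty, finsum_mem_def, finsum_eq_sum_of_fintype]
  exact Finset.sum_congr rfl fun K _ => Set.indicator_apply _ _ _

theorem stmt10
    (G : SimpleGraph V) (R : Set V) (r : V) (hr : r ∈ R)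
    (x : V × V → ℝ) (y : DirFullComp G R → ℝ) (hxy : memI G R r x y)
    (S T : Set V) (hS : TightFor G R r x y S) (hT : TightFor G R r x y T)
    (hST : (S ∩ T ∩ R).Nonempty) :
    TightFor G R r x y (S ∩ T) ∧ TightFor G R r x y (S ∪ T) := by
  obtain ⟨hx0, hy0, hfeas⟩ := hxy
  obtain ⟨w, ⟨hwS, hwT⟩, hwR⟩ := hST
  have hvI : Valid R r (S ∩ T) := ⟨⟨w, ⟨hwS, hwT⟩, hwR⟩, fun h => hS.1.2 h.1⟩
  have hvU : Valid R r (S ∪ T) := ⟨⟨w, Or.inl hwS, hwR⟩, fun h => h.elim hS.1.2 hT.1.2⟩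
  have hxsub : cutx G x (S ∩ T) + cutx G x (S ∪ T) ≤ cutx G x S + cutx G x T := by
    simp only [cutx_eq_sum, ← Finset.sum_add_distrib]
    exact Finset.sum_le_sum fun a _ => arc_ineq G S T a (x a) (hx0 a)
  have hysub : cuty G R y (S ∩ T) + cuty G R y (S ∪ T) ≤ cuty G R y S + cuty G R y T := by
    simp only [cuty_eq_sum, ← Finset.sum_add_distrib]
    exact Finset.sum_le_sum fun K _ => comp_ineq K S T (y K) (hy0 K)
  have h1 := hfeas _ hvI
  have h2 := hfeas _ hvU
  have hSv := hS.2
  have hTv := hT.2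
  refine ⟨⟨hvI, by linarith⟩, ⟨hvU, by linarith⟩⟩
end
end

section
/- Let 𝒳* be the set of inclusion-wise maximal members of 𝒳 and 𝒴* the set of inclusion-wise minimal members of 𝒴. A directed full component K with centre v and sink u is feasible with respect to (x,y) if and only if (a) x_a > 0 for every arc a of K, (b) every source of K lies in 𝒞, (c) K has at most one source in each member of 𝒳*, and (d) K has at least one source in each member of 𝒴*. -/
open Classical

noncomputable section

variable {V : Type*} [Fintype V] [DecidableEq V]

/-!
Shifting weight `λ` from the arcs of `K` onto `K` changes the left-hand side of the
constraint of `U` by `λ (Δ_K⁺(U) - |δ⁺(U) ∩ K|)`. Since there are finitely many constraints,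
`K` is feasible iff `x > 0` on the arcs of `K` and no tight set loses slack, i.e.
`|δ⁺(U) ∩ K| ≤ Δ_K⁺(U)` for every tight `U`. For a star with centre `v` and sink `u`,
`|δ⁺(U) ∩ K|` is `[u ∉ U]` when `v ∈ U` and the number of sources in `U` when `v ∉ U`;
the four cases for `u, v ∈ U` give (b), (c), (d) (and a vacuous case). Restricting to the
maximal members of `𝒳` and minimal members of `𝒴` is harmless because "at most one source"
is antitone and "at least one source" is monotone in the set.
-/

open Filter Topology

section

variable {V : Type*}

theorem eventually_nhdsGT_zero_le_add_mul {b s t : ℝ} (hbs : b ≤ s) (ht : s = b → 0 ≤ t) :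
    ∀ᶠ lam in 𝓝[>] (0 : ℝ), b ≤ s + lam * t := by
  rcases hbs.lt_or_eq with hlt | heq
  · have hlim : Tendsto (fun lam : ℝ => s + lam * t) (𝓝 0) (𝓝 s) :=
      (continuous_const.add (continuous_id.mul continuous_const)).tendsto' 0 s (by simp)
    exact ((hlim.eventually (lt_mem_nhds hlt)).filter_mono nhdsWithin_le_nhds).mono
      fun _ => le_of_lt
  · filter_upwards [self_mem_nhdsWithin] with lam (hlam : 0 < lam)
    rw [heq]
    exact le_add_of_nonneg_right (mul_nonneg hlam.le (ht heq.symm))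

theorem cutx_sub_smul [Finite V] {G : SimpleGraph V} (x x' : V × V → ℝ) (c : ℝ) (U : Set V) :
    cutx G (x - c • x') U = cutx G x U - c * cutx G x' U := by
  simp only [cutx, Pi.sub_apply, Pi.smul_apply, smul_eq_mul]
  rw [finsum_mem_sub_distrib _ _ (Set.toFinite _), mul_finsum_mem]

theorem cuty_add_smul_single [Fintype V] {G : SimpleGraph V} {R : Set V}
    (y : DirFullComp G R → ℝ) (K : DirFullComp G R) (c : ℝ) (U : Set V) :
    cuty G R (y + c • Pi.single K 1) U = cuty G R y U + c * K.cross01 U := by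
  have hfin : {K' : DirFullComp G R | K'.crosses U}.Finite := Set.toFinite _
  have hsingle : ∑ᶠ K' ∈ {K' : DirFullComp G R | K'.crosses U}, Pi.single K (1 : ℝ) K' =
      K.cross01 U := by
    rw [finsum_mem_eq_finite_toFinset_sum _ hfin, Finset.sum_pi_single']
    simp [DirFullComp.cross01]
  simp only [cuty, Pi.add_apply, Pi.smul_apply, smul_eq_mul]
  rw [finsum_mem_add_distrib hfin, ← mul_finsum_mem, hsingle]

theorem cutx_chi [Finite V] [DecidableEq V] {G : SimpleGraph V} {R : Set V}
    (K : DirFullComp G R) (U : Set V) :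
    cutx G K.chi U = ({a | a ∈ K.arcs ∧ a.1 ∈ U ∧ a.2 ∉ U} : Set (V × V)).ncard := by
  have hfin : (outArcs G U).Finite := Set.toFinite _
  rw [cutx, finsum_mem_eq_finite_toFinset_sum _ hfin]
  simp only [DirFullComp.chi]
  rw [Finset.sum_boole, Set.ncard_eq_toFinset_card']
  congr 2
  ext a
  simp only [Finset.mem_filter, Set.Finite.mem_toFinset, Set.mem_toFinset, outArcs,
    Set.mem_ofPred_eq]
  exact ⟨fun h => ⟨h.2, h.1.2⟩, fun h => ⟨⟨(K.arcs_adj a h.1).adj_sub, h.2⟩, h.1⟩⟩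

theorem feasibleComp_iff [Fintype V] [DecidableEq V] {G : SimpleGraph V} {R : Set V} {r : V}
    {x : V × V → ℝ} {y : DirFullComp G R → ℝ} (hxy : memI G R r x y) (K : DirFullComp G R) :
    FeasibleComp G R r x y K ↔
      (∀ a ∈ K.arcs, 0 < x a) ∧ ∀ U, TightFor G R r x y U → cutx G K.chi U ≤ K.cross01 U := by
  obtain ⟨hx, hy, hcover⟩ := hxy
  have hchi (a : V × V) : K.chi a = if a ∈ K.arcs then 1 else 0 := rfl
  constructor
  · rintro ⟨lam, hlam, hx', -, hcover'⟩
    refine ⟨fun a ha => ?_, fun U hU => ?_⟩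
    · have := hx' a
      simp only [Pi.sub_apply, Pi.smul_apply, smul_eq_mul, hchi, if_pos ha] at this
      linarith
    · have := hcover' U hU.1
      rw [cutx_sub_smul, cuty_add_smul_single] at this
      have hgain : 0 ≤ lam * (K.cross01 U - cutx G K.chi U) := by linarith [hU.2]
      exact sub_nonneg.1 (nonneg_of_mul_nonneg_right hgain hlam)
  · rintro ⟨hpos, htight⟩
    have hx_ev : ∀ᶠ lam in 𝓝[>] 0, ∀ a, 0 ≤ x a + lam * -K.chi a :=
      eventually_all.2 fun a => eventually_nhdsGT_zero_le_add_mul (hx a) fun h0 => by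
        by_cases ha : a ∈ K.arcs
        · exact absurd h0 (hpos a ha).ne'
        · simp [hchi, ha]
    have hcover_ev : ∀ᶠ lam in 𝓝[>] 0, ∀ U, Valid R r U →
        1 ≤ cutx G x U + cuty G R y U + lam * (K.cross01 U - cutx G K.chi U) :=
      eventually_all.2 fun U => eventually_imp_distrib_left.2 fun hU =>
        eventually_nhdsGT_zero_le_add_mul (hcover U hU) fun h1 =>
          sub_nonneg.2 (htight U ⟨hU, h1⟩)
    obtain ⟨lam, ⟨hx', hcover'⟩, hlam : 0 < lam⟩ :=
      ((hx_ev.and hcover_ev).and self_mem_nhdsWithin).exists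
    refine ⟨lam, hlam, fun a => ?_, fun K' => ?_, fun U hU => ?_⟩
    · have := hx' a
      simp only [Pi.sub_apply, Pi.smul_apply, smul_eq_mul]
      linarith
    · simp only [Pi.add_apply, Pi.smul_apply, smul_eq_mul]
      have hsingle : (0 : DirFullComp G R → ℝ) ≤ Pi.single K 1 :=
        Pi.single_nonneg.2 zero_le_one
      exact add_nonneg (hy K') (mul_nonneg hlam.le (hsingle K'))
    · rw [cutx_sub_smul, cuty_add_smul_single]
      linarith [hcover' U hU]

end

namespace DirFullComp

section

variable {V : Type*} {G : SimpleGraph V} {R : Set V} {K : DirFullComp G R} {v : V}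

theorem IsCentre.mem_verts (hK : K.IsCentre v) : v ∈ K.H.verts :=
  (hK.symm ▸ rfl : v ∈ K.H.verts \ R).1

theorem IsCentre.notMem (hK : K.IsCentre v) : v ∉ R :=
  (hK.symm ▸ rfl : v ∈ K.H.verts \ R).2

theorem IsCentre.mem_of_ne (hK : K.IsCentre v) {w : V} (hw : w ∈ K.H.verts) (hwv : w ≠ v) :
    w ∈ R := by
  by_contra hwR
  have : w ∈ ({v} : Set V) := hK ▸ ⟨hw, hwR⟩
  exact hwv this

theorem IsCentre.adj_cases (hnt : NoTerminalEdges G R) (hK : K.IsCentre v) {a b : V}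
    (hab : K.H.Adj a b) : (a = v ∧ b ≠ v) ∨ (b = v ∧ a ≠ v) := by
  rcases hnt a b hab.adj_sub with haR | hbR
  · obtain rfl : a = v := by_contra fun hav => haR (hK.mem_of_ne hab.fst_mem hav)
    exact Or.inl ⟨rfl, hab.ne.symm⟩
  · obtain rfl : b = v := by_contra fun hbv => hbR (hK.mem_of_ne hab.snd_mem hbv)
    exact Or.inr ⟨rfl, hab.ne⟩

theorem IsCentre.mem_arcs_iff (hnt : NoTerminalEdges G R) (hK : K.IsCentre v) {a : V × V} :
    a ∈ K.arcs ↔ (a.1 ∈ K.sources ∧ a.2 = v) ∨ a = (v, K.sink) := by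
  have hvR := hK.notMem
  have leaf_arc : ∀ w ∈ K.H.verts, w ≠ v → w ≠ K.sink → (w, v) ∈ K.arcs := by
    intro w hw hwv hws
    obtain ⟨z, hz, -⟩ := K.toward_sink w hw hws
    rcases hK.adj_cases hnt (K.arcs_adj _ hz) with ⟨h, -⟩ | ⟨rfl, -⟩
    · exact absurd h hwv
    · exact hz
  have centre_arc : (v, K.sink) ∈ K.arcs ∧ ∀ b, (v, b) ∈ K.arcs → b = K.sink := by
    obtain ⟨z, hz, huniq⟩ :=
      K.toward_sink v hK.mem_verts fun h => hvR (h ▸ K.sink_terminal)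
    obtain rfl : z = K.sink := by
      by_contra hzs
      have hvz := K.arcs_adj _ hz
      exact K.arcs_antisymm z v (leaf_arc z hvz.snd_mem hvz.ne.symm hzs) hz
    exact ⟨hz, huniq⟩
  obtain ⟨a, b⟩ := a
  constructor
  · intro hab
    have hadj := K.arcs_adj _ hab
    rcases hK.adj_cases hnt hadj with ⟨rfl, -⟩ | ⟨rfl, hav⟩
    · exact Or.inr (by rw [centre_arc.2 b hab])
    · refine Or.inl ⟨⟨⟨hadj.fst_mem, hK.mem_of_ne hadj.fst_mem hav⟩, ?_⟩, rfl⟩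
      rintro rfl
      exact K.sink_no_out _ hab
  · rintro (⟨⟨⟨haV, haR⟩, has⟩, rfl⟩ | h)
    · exact leaf_arc a haV (fun h => hvR (h ▸ haR)) has
    · exact h ▸ centre_arc.1

theorem IsCentre.adj_of_mem_sources (hnt : NoTerminalEdges G R) (hK : K.IsCentre v) {w : V}
    (hw : w ∈ K.sources) : G.Adj v w :=
  (K.arcs_adj (w, v) ((hK.mem_arcs_iff hnt).2 (Or.inl ⟨hw, rfl⟩))).adj_sub.symm

variable [Finite V] [DecidableEq V] {U : Set V}

theorem IsCentre.cutx_chi_of_mem (hnt : NoTerminalEdges G R) (hK : K.IsCentre v) (hvU : v ∈ U) :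
    cutx G K.chi U = if K.sink ∈ U then 0 else 1 := by
  rw [cutx_chi]
  split_ifs with hsU
  · have hcut : {a : V × V | a ∈ K.arcs ∧ a.1 ∈ U ∧ a.2 ∉ U} = ∅ := by
      ext ⟨a, b⟩
      simp only [hK.mem_arcs_iff hnt]
      aesop
    simp [hcut]
  · have hcut : {a : V × V | a ∈ K.arcs ∧ a.1 ∈ U ∧ a.2 ∉ U} = {(v, K.sink)} := by
      ext ⟨a, b⟩
      simp only [hK.mem_arcs_iff hnt]
      aesop
    simp [hcut]

theorem IsCentre.cutx_chi_of_notMem (hnt : NoTerminalEdges G R) (hK : K.IsCentre v)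
    (hvU : v ∉ U) : cutx G K.chi U = (K.sources ∩ U).ncard := by
  rw [cutx_chi, ← Set.ncard_image_of_injective (K.sources ∩ U) (Prod.mk_left_injective v)]
  congr 2
  ext ⟨a, b⟩
  simp only [hK.mem_arcs_iff hnt]
  aesop

theorem IsCentre.cutx_chi_le_cross01_iff (hnt : NoTerminalEdges G R) (hK : K.IsCentre v) :
    cutx G K.chi U ≤ K.cross01 U ↔
      (v ∉ U → K.sink ∈ U → K.sources ∩ U = ∅) ∧
      (v ∉ U → K.sink ∉ U → (K.sources ∩ U).Subsingleton) ∧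
      (v ∈ U → K.sink ∉ U → (K.sources ∩ U).Nonempty) := by
  by_cases hvU : v ∈ U <;> by_cases hsU : K.sink ∈ U
  · simp [hK.cutx_chi_of_mem hnt hvU, cross01, crosses, hvU, hsU]
  · rcases (K.sources ∩ U).eq_empty_or_nonempty with hempty | hne
    · simp [hK.cutx_chi_of_mem hnt hvU, cross01, crosses, hvU, hsU, hempty]
    · simp [hK.cutx_chi_of_mem hnt hvU, cross01, crosses, hvU, hsU, hne]
  · simp [hK.cutx_chi_of_notMem hnt hvU, cross01, crosses, hvU, hsU,
      Set.ncard_eq_zero (Set.toFinite (K.sources ∩ U))]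
  · rcases (K.sources ∩ U).eq_empty_or_nonempty with hempty | hne
    · simp [hK.cutx_chi_of_notMem hnt hvU, cross01, crosses, hvU, hsU, hempty]
    · simp [hK.cutx_chi_of_notMem hnt hvU, cross01, crosses, hvU, hsU, hne,
        Set.ncard_le_one_iff_subsingleton]

end

end DirFullComp

section

variable {V : Type*} [Finite V] {G : SimpleGraph V} {R : Set V} {r : V} {x : V × V → ℝ}
  {y : DirFullComp G R → ℝ} {v u : V} {S : Set V}

theorem forall_mem_XStar_subsingleton_iff (hS : S ⊆ Cset G R r x y v u) :
    (∀ X ∈ XStar G R r x y v u, (S ∩ X).Subsingleton) ↔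
      ∀ U, TightFor G R r x y U → v ∉ U → u ∉ U → (S ∩ U).Subsingleton := by
  have hSU (U : Set V) : S ∩ (U ∩ Cset G R r x y v u) = S ∩ U :=
    by rw [Set.inter_comm U, ← Set.inter_assoc, Set.inter_eq_left.2 hS]
  constructor
  · intro h U hU hvU huU
    obtain ⟨M, hUM, hM⟩ := (Set.toFinite (Xfam G R r x y v u)).exists_le_maximal
      ⟨U, hU, huU, hvU, rfl⟩
    rw [← hSU]
    exact (h M ⟨hM.1, fun X hX hMX => le_antisymm (hM.2 hX hMX) hMX⟩).anti
      (Set.inter_subset_inter_right _ hUM)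
  · rintro h _ ⟨⟨U, hU, huU, hvU, rfl⟩, -⟩
    rw [hSU]
    exact h U hU hvU huU

theorem forall_mem_YStar_nonempty_iff (hS : S ⊆ Cset G R r x y v u) :
    (∀ Y ∈ YStar G R r x y v u, (S ∩ Y).Nonempty) ↔
      ∀ U, TightFor G R r x y U → v ∈ U → u ∉ U → (S ∩ U).Nonempty := by
  have hSU (U : Set V) : S ∩ (U ∩ Cset G R r x y v u) = S ∩ U :=
    by rw [Set.inter_comm U, ← Set.inter_assoc, Set.inter_eq_left.2 hS]
  constructor
  · intro h U hU hvU huU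
    obtain ⟨M, hMU, hM⟩ := (Set.toFinite (Yfam G R r x y v u)).exists_le_minimal
      ⟨U, hU, hvU, huU, rfl⟩
    rw [← hSU]
    exact (h M ⟨hM.1, fun Y hY hYM => le_antisymm hYM (hM.2 hY hYM)⟩).mono
      (Set.inter_subset_inter_right _ hMU)
  · rintro h _ ⟨⟨U, hU, hvU, huU, rfl⟩, -⟩
    rw [hSU]
    exact h U hU hvU huU

end

namespace DirFullComp

variable {V : Type*} {G : SimpleGraph V} {R : Set V} {K : DirFullComp G R} {v : V} {r : V}
  {x : V × V → ℝ} {y : DirFullComp G R → ℝ}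

theorem IsCentre.sources_subset_Cset_iff (hnt : NoTerminalEdges G R) (hK : K.IsCentre v) :
    K.sources ⊆ Cset G R r x y v K.sink ↔
      ∀ U, TightFor G R r x y U → v ∉ U → K.sink ∈ U → K.sources ∩ U = ∅ := by
  constructor
  · intro hS U hU hvU hsU
    exact Set.eq_empty_iff_forall_notMem.2 fun w hw => (hS hw.1).2.2 ⟨U, hU, hsU, hw.2, hvU⟩
  · intro h w hw
    refine ⟨hK.adj_of_mem_sources hnt hw, hw.2, ?_⟩
    rintro ⟨U, hU, hsU, hwU, hvU⟩
    exact Set.eq_empty_iff_forall_notMem.1 (h U hU hvU hsU) w ⟨hw, hwU⟩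

theorem IsCentre.forall_tight_cutx_chi_le_cross01_iff [Finite V] [DecidableEq V]
    (hnt : NoTerminalEdges G R) (hK : K.IsCentre v) :
    (∀ U, TightFor G R r x y U → cutx G K.chi U ≤ K.cross01 U) ↔
      K.sources ⊆ Cset G R r x y v K.sink ∧
        (∀ X ∈ XStar G R r x y v K.sink, (K.sources ∩ X).Subsingleton) ∧
        (∀ Y ∈ YStar G R r x y v K.sink, (K.sources ∩ Y).Nonempty) := by
  simp only [hK.cutx_chi_le_cross01_iff hnt, imp_and, forall_and]
  rw [← hK.sources_subset_Cset_iff hnt]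
  exact and_congr_right fun hS => and_congr (forall_mem_XStar_subsingleton_iff hS).symm
    (forall_mem_YStar_nonempty_iff hS).symm

end DirFullComp

theorem stmt13_general
    (G : SimpleGraph V) (R : Set V) (r : V)
    (hnt : NoTerminalEdges G R)
    (x : V × V → ℝ) (y : DirFullComp G R → ℝ) (hxy : memI G R r x y)
    (v u : V)
    (K : DirFullComp G R) (hK : K.IsCentre v) (hsink : K.sink = u) :
    FeasibleComp G R r x y K ↔
      ((∀ a ∈ K.arcs, 0 < x a) ∧
        K.sources ⊆ Cset G R r x y v u ∧
        (∀ X ∈ XStar G R r x y v u, (K.sources ∩ X).Subsingleton) ∧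
        (∀ Y ∈ YStar G R r x y v u, (K.sources ∩ Y).Nonempty)) := by
  subst hsink
  rw [feasibleComp_iff hxy, hK.forall_tight_cutx_chi_le_cross01_iff hnt]

theorem stmt13
    (G : SimpleGraph V) (R : Set V) (r : V) (hr : r ∈ R)
    (hqb : QuasiBipartite G R) (hnt : NoTerminalEdges G R)
    (x : V × V → ℝ) (y : DirFullComp G R → ℝ) (hxy : memI G R r x y)
    (v u : V) (hv : v ∉ R) (hu : u ∈ R) (hadj : G.Adj v u)
    (K : DirFullComp G R) (hK : K.IsCentre v) (hsink : K.sink = u) :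
    FeasibleComp G R r x y K ↔
      ((∀ a ∈ K.arcs, 0 < x a) ∧
        K.sources ⊆ Cset G R r x y v u ∧
        (∀ X ∈ XStar G R r x y v u, (K.sources ∩ X).Subsingleton) ∧
        (∀ Y ∈ YStar G R r x y v u, (K.sources ∩ Y).Nonempty)) :=
  stmt13_general G R r hnt x y hxy v u K hK hsink
end
end

section
/- Let f: 2^R → ℝ be intersecting supermodular and let the arc costs c: A → ℝ_{≥0} be nonnegative. If z is an optimal solution of (DCR_f^D) that, among all optimal solutions, maximizes Σ_{U⊆R} |U|²·z_U, then the support of z is laminar. -/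
open Classical

noncomputable section

variable {V : Type*} [Fintype V] [DecidableEq V]

/-- Auxiliary: shifting weight among four members of a finite index family. -/
lemma finsum_shift {α : Type*} (D : Set α) (hD : D.Finite) (g zf : α → ℝ) (ε : ℝ)
    (A B C E : α) (hA : A ∈ D) (hB : B ∈ D) (hC : C ∈ D) (hE : E ∈ D) :
    (∑ᶠ U ∈ D, g U * (zf U + (if U = A then ε else 0) + (if U = B then ε else 0)
      - (if U = C then ε else 0) - (if U = E then ε else 0)))
      = (∑ᶠ U ∈ D, g U * zf U) + ε * (g A + g B - g C - g E) := by
  classical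
  rw [← hD.coe_toFinset, finsum_mem_coe_finset, finsum_mem_coe_finset]
  have hpt : ∀ U, g U * (zf U + (if U = A then ε else 0) + (if U = B then ε else 0)
      - (if U = C then ε else 0) - (if U = E then ε else 0))
      = g U * zf U + ((if U = A then g U * ε else 0) + (if U = B then g U * ε else 0)
      - ((if U = C then g U * ε else 0) + (if U = E then g U * ε else 0))) := by
    intro U
    simp only [mul_add, mul_sub, mul_ite, mul_zero]
    ring
  simp only [hpt]
  rw [Finset.sum_add_distrib, Finset.sum_sub_distrib, Finset.sum_add_distrib,
    Finset.sum_add_distrib]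
  simp only [Finset.sum_ite_eq', hD.mem_toFinset, hA, hB, hC, hE, if_true]
  ring

/-- Submodularity of the crossing indicator. -/
lemma cross01_submod {G : SimpleGraph V} {R : Set V} (K : DirFullComp G R) (S T : Set V) :
    K.cross01 (S ∩ T) + K.cross01 (S ∪ T) ≤ K.cross01 S + K.cross01 T := by
  have h0 : ∀ U : Set V, (0 : ℝ) ≤ (if K.crosses U then 1 else 0) := by
    intro U; by_cases h : K.crosses U <;> simp [h]
  have c1 : K.crosses (S ∩ T) → K.crosses (S ∪ T) → K.crosses S ∧ K.crosses T := by
    rintro ⟨hsi, w, hw⟩ ⟨hsu, -⟩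
    exact ⟨⟨fun h => hsu (Or.inl h), w, hw.1, hw.2.1⟩,
      ⟨fun h => hsu (Or.inr h), w, hw.1, hw.2.2⟩⟩
  have c2 : K.crosses (S ∩ T) → K.crosses S ∨ K.crosses T := by
    rintro ⟨hsi, w, hw⟩
    by_cases h : K.sink ∈ S
    · exact Or.inr ⟨fun h' => hsi ⟨h, h'⟩, w, hw.1, hw.2.2⟩
    · exact Or.inl ⟨h, w, hw.1, hw.2.1⟩
  have c3 : K.crosses (S ∪ T) → K.crosses S ∨ K.crosses T := by
    rintro ⟨hsu, w, hw⟩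
    rcases hw.2 with h | h
    · exact Or.inl ⟨fun h' => hsu (Or.inl h'), w, hw.1, h⟩
    · exact Or.inr ⟨fun h' => hsu (Or.inr h'), w, hw.1, h⟩
  by_cases hi : K.crosses (S ∩ T) <;> by_cases hu : K.crosses (S ∪ T)
  · obtain ⟨hs, ht⟩ := c1 hi hu
    simp [DirFullComp.cross01, hi, hu, hs, ht]
  · rcases c2 hi with hs | ht
    · simp only [DirFullComp.cross01, if_pos hi, if_neg hu, if_pos hs]
      linarith [h0 T]
    · simp only [DirFullComp.cross01, if_pos hi, if_neg hu, if_pos ht]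
      linarith [h0 S]
  · rcases c3 hu with hs | ht
    · simp only [DirFullComp.cross01, if_neg hi, if_pos hu, if_pos hs]
      linarith [h0 T]
    · simp only [DirFullComp.cross01, if_neg hi, if_pos hu, if_pos ht]
      linarith [h0 S]
  · simp only [DirFullComp.cross01, if_neg hi, if_neg hu]
    linarith [h0 S, h0 T]

theorem stmt14
    (G : SimpleGraph V) (R : Set V) (r : V) (hr : r ∈ R)
    (c : V → V → ℝ) (hc : ∀ u v, 0 ≤ c u v)
    (f : Set V → ℝ) (hf : IntersectingSupermodular R f)
    (z : Set V → ℝ)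
    (hopt : DualFeasible G R r c z ∧
      ∀ z' : Set V → ℝ, DualFeasible G R r c z' → DualObj R r f z' ≤ DualObj R r f z)
    (hmax : ∀ z' : Set V → ℝ,
      (DualFeasible G R r c z' ∧
        ∀ z'' : Set V → ℝ, DualFeasible G R r c z'' →
          DualObj R r f z'' ≤ DualObj R r f z') →
      ∑ᶠ U ∈ dualIndex R r, (U.ncard : ℝ) ^ 2 * z' U ≤
        ∑ᶠ U ∈ dualIndex R r, (U.ncard : ℝ) ^ 2 * z U) :
    ∀ S T : Set V, z S ≠ 0 → z T ≠ 0 → S ⊆ T ∨ T ⊆ S ∨ Disjoint S T := by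
  obtain ⟨⟨hnn, hvan, hconstr⟩, hopt2⟩ := hopt
  intro S T hS hT
  by_contra hcon'
  push_neg at hcon'
  obtain ⟨hST, hTS, hdisj⟩ := hcon'
  -- memberships in the dual index set
  have hSD : S ∈ dualIndex R r := by
    by_contra h; exact hS (hvan S h)
  have hTD : T ∈ dualIndex R r := by
    by_contra h; exact hT (hvan T h)
  obtain ⟨hSne, hSsub⟩ := hSD
  obtain ⟨hTne, hTsub⟩ := hTD
  have hSD : S ∈ dualIndex R r := ⟨hSne, hSsub⟩
  have hTD : T ∈ dualIndex R r := ⟨hTne, hTsub⟩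
  have hInt : (S ∩ T).Nonempty := Set.not_disjoint_iff_nonempty_inter.mp hdisj
  have hAD : S ∩ T ∈ dualIndex R r := ⟨hInt, Set.inter_subset_left.trans hSsub⟩
  have hBD : S ∪ T ∈ dualIndex R r := ⟨hSne.inl, Set.union_subset hSsub hTsub⟩
  -- distinctness of the four sets
  have hA_S : S ∩ T ≠ S := fun h => hST (h.symm.subset.trans Set.inter_subset_right)
  have hA_T : S ∩ T ≠ T := fun h => hTS (h.symm.subset.trans Set.inter_subset_left)
  have hB_S : S ∪ T ≠ S := fun h => hTS (Set.subset_union_right.trans h.subset)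
  have hB_T : S ∪ T ≠ T := fun h => hST (Set.subset_union_left.trans h.subset)
  have hS_T : S ≠ T := fun h => hST (le_of_eq h)
  -- the perturbation
  have hzS : 0 < z S := lt_of_le_of_ne (hnn S) (Ne.symm hS)
  have hzT : 0 < z T := lt_of_le_of_ne (hnn T) (Ne.symm hT)
  set ε : ℝ := min (z S) (z T) with hεdef
  have hε : 0 < ε := lt_min hzS hzT
  set z' : Set V → ℝ := fun U =>
    z U + (if U = S ∩ T then ε else 0) + (if U = S ∪ T then ε else 0)
      - (if U = S then ε else 0) - (if U = T then ε else 0) with hz'def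
  have hshift : ∀ g : Set V → ℝ,
      (∑ᶠ U ∈ dualIndex R r, g U * z' U)
        = (∑ᶠ U ∈ dualIndex R r, g U * z U)
          + ε * (g (S ∩ T) + g (S ∪ T) - g S - g T) := by
    intro g
    simp only [hz'def]
    exact finsum_shift (dualIndex R r) (Set.toFinite _) g z ε _ _ _ _ hAD hBD hSD hTD
  -- feasibility of the perturbed solution
  have hfeas' : DualFeasible G R r c z' := by
    refine ⟨?_, ?_, ?_⟩
    · intro U
      simp only [hz'def]
      by_cases h3 : U = S
      · rw [h3]
        rw [if_neg (Ne.symm hA_S), if_neg (Ne.symm hB_S), if_pos rfl, if_neg hS_T]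
        simp only [add_zero]
        linarith [min_le_left (z S) (z T)]
      · by_cases h4 : U = T
        · rw [h4]
          rw [if_neg (Ne.symm hA_T), if_neg (Ne.symm hB_T), if_neg (Ne.symm hS_T), if_pos rfl]
          simp only [add_zero, sub_zero]
          linarith [min_le_right (z S) (z T)]
        · rw [if_neg h3, if_neg h4]
          have := hnn U
          split_ifs <;> linarith
    · intro U hU
      have h1 : U ≠ S ∩ T := fun h => hU (h ▸ hAD)
      have h2 : U ≠ S ∪ T := fun h => hU (h ▸ hBD)
      have h3 : U ≠ S := fun h => hU (h ▸ ⟨hSne, hSsub⟩)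
      have h4 : U ≠ T := fun h => hU (h ▸ ⟨hTne, hTsub⟩)
      simp only [hz'def, if_neg h1, if_neg h2, if_neg h3, if_neg h4, hvan U hU]
      ring
    · intro K
      rw [hshift (fun U => K.cross01 U)]
      have hsub := cross01_submod K S T
      have hmul : ε * (K.cross01 (S ∩ T) + K.cross01 (S ∪ T)
          - K.cross01 S - K.cross01 T) ≤ 0 :=
        mul_nonpos_of_nonneg_of_nonpos hε.le (by linarith)
      have := hconstr K
      linarith
  -- the perturbed solution is also optimal
  have hobj : DualObj R r f z ≤ DualObj R r f z' := by
    unfold DualObj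
    rw [hshift f]
    have hsup := hf S T (hSsub.trans Set.diff_subset) (hTsub.trans Set.diff_subset) hInt
    nlinarith
  have hle := hmax z' ⟨hfeas', fun z'' h'' => (hopt2 z'' h'').trans hobj⟩
  rw [hshift (fun U => (U.ncard : ℝ) ^ 2)] at hle
  -- strict increase of the squared-cardinality potential
  have hssub1 : S ∩ T ⊂ S := Set.inter_subset_left.ssubset_of_ne hA_S
  have hssub2 : S ∩ T ⊂ T := Set.inter_subset_right.ssubset_of_ne hA_T
  have hlt1 : (S ∩ T).ncard < S.ncard := Set.ncard_lt_ncard hssub1 (Set.toFinite S)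
  have hlt2 : (S ∩ T).ncard < T.ncard := Set.ncard_lt_ncard hssub2 (Set.toFinite T)
  have hsum : (S ∪ T).ncard + (S ∩ T).ncard = S.ncard + T.ncard :=
    Set.ncard_union_add_ncard_inter S T (Set.toFinite S) (Set.toFinite T)
  have hc : ((S ∪ T).ncard : ℝ) + ((S ∩ T).ncard : ℝ) = (S.ncard : ℝ) + (T.ncard : ℝ) := by
    exact_mod_cast congrArg (fun n : ℕ => (n : ℝ)) hsum
  have hc1 : ((S ∩ T).ncard : ℝ) < (S.ncard : ℝ) := by exact_mod_cast hlt1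
  have hc2 : ((S ∩ T).ncard : ℝ) < (T.ncard : ℝ) := by exact_mod_cast hlt2
  have hkey : (0 : ℝ) < ((S ∩ T).ncard : ℝ) ^ 2 + ((S ∪ T).ncard : ℝ) ^ 2
      - (S.ncard : ℝ) ^ 2 - (T.ncard : ℝ) ^ 2 := by
    nlinarith [mul_pos (sub_pos.2 hc1) (sub_pos.2 hc2)]
  nlinarith [mul_pos hε hkey]
end
end
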